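/- For every 2×2 complex matrix M: tr([M, B₂]R) − tr(M B₂) = tr(B₂) · tr(M(R − I)). -/

import Mathlib

/-!
Write `R = Rmat B₁ B₂` and `Δ = b₁d₂ − d₁b₂`. Since `det B₂ = 0`, the row vector `(−d₂, b₂)`
annihilates `B₂`, so `R B₂ = 0`; hence `tr(B₂ M R) = tr(M R B₂) = 0` and the left side equals
`−tr(M B₂ (1 − R))`. On the other hand `1 − R = Δ⁻¹ (b₂, d₂)ᵀ (−d₁, b₁)`, and its column vector
`(b₂, d₂) = B₂ e₂` is an eigenvector of `B₂` for `tr B₂`, because `B₂² = tr B₂ · B₂` by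
Cayley–Hamilton. So `B₂ (1 − R) = tr B₂ · (1 − R)`, which turns the left side into the right.
-/

noncomputable section

/-- The rank-one matrix `R = (−1/(b₁d₂ − d₁b₂)) · (b₁, d₁)ᵀ · (−d₂, b₂)`
built from the second columns `(b, d)` of `B₁` and `B₂`
(here `b_k = (B_k)₁₂`, `d_k = (B_k)₂₂`). -/
def Rmat (B₁ B₂ : Matrix (Fin 2) (Fin 2) ℂ) : Matrix (Fin 2) (Fin 2) ℂ :=
  (-(B₁ 0 1 * B₂ 1 1 - B₁ 1 1 * B₂ 0 1)⁻¹) •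
    Matrix.vecMulVec ![B₁ 0 1, B₁ 1 1] ![-(B₂ 1 1), B₂ 0 1]

namespace Matrix

variable {n α : Type*} [Fintype n] [DecidableEq n] [CommRing α]

theorem mul_self_eq_trace_smul_sub_det_smul_one (A : Matrix (Fin 2) (Fin 2) α) :
    A * A = A.trace • A - A.det • 1 := by
  ext i j
  fin_cases i <;> fin_cases j <;>
    simp [mul_apply, trace_fin_two, det_fin_two, Fin.sum_univ_two] <;> ring

theorem mul_self_eq_trace_smul_of_det_eq_zero {A : Matrix (Fin 2) (Fin 2) α} (h : A.det = 0) :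
    A * A = A.trace • A := by
  rw [mul_self_eq_trace_smul_sub_det_smul_one, h, zero_smul, sub_zero]

theorem trace_commutator_mul_sub_trace_mul (M B P : Matrix n n α) (hPB : P * B = 0)
    (hB : B * (1 - P) = B.trace • (1 - P)) :
    ((M * B - B * M) * P).trace - (M * B).trace = B.trace * (M * (P - 1)).trace := by
  have hBMP : (B * M * P).trace = 0 := by
    rw [trace_mul_cycle, hPB, Matrix.zero_mul, trace_zero]
  have hMBP : (M * B * (1 - P)).trace = B.trace * (M * (1 - P)).trace := by
    rw [Matrix.mul_assoc, hB, Matrix.mul_smul, trace_smul, smul_eq_mul]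
  calc ((M * B - B * M) * P).trace - (M * B).trace
      = -(M * B * (1 - P)).trace := by
        rw [Matrix.sub_mul, trace_sub, hBMP, Matrix.mul_sub, Matrix.mul_one, trace_sub]; ring
    _ = B.trace * (M * (P - 1)).trace := by
        rw [hMBP, ← neg_sub P 1, Matrix.mul_neg, trace_neg, mul_neg, neg_neg]

end Matrix

open Matrix

theorem Rmat_mul_eq_zero (B₁ : Matrix (Fin 2) (Fin 2) ℂ) {B₂ : Matrix (Fin 2) (Fin 2) ℂ}
    (h₂ : B₂.det = 0) : Rmat B₁ B₂ * B₂ = 0 := by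
  have : ![-(B₂ 1 1), B₂ 0 1] ᵥ* B₂ = 0 := by
    rw [det_fin_two] at h₂
    ext j
    fin_cases j
    · simp [vecMul, dotProduct, Fin.sum_univ_two]
      linear_combination -h₂
    · simp [vecMul, dotProduct, Fin.sum_univ_two]
      ring
  rw [Rmat, Matrix.smul_mul, vecMulVec_mul, this, vecMulVec_zero, smul_zero]

theorem one_sub_Rmat {B₁ B₂ : Matrix (Fin 2) (Fin 2) ℂ}
    (hden : B₁ 0 1 * B₂ 1 1 - B₁ 1 1 * B₂ 0 1 ≠ 0) :
    1 - Rmat B₁ B₂ = (B₁ 0 1 * B₂ 1 1 - B₁ 1 1 * B₂ 0 1)⁻¹ •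
      vecMulVec (B₂ *ᵥ Pi.single 1 1) ![-(B₁ 1 1), B₁ 0 1] := by
  have hR : (B₁ 0 1 * B₂ 1 1 - B₁ 1 1 * B₂ 0 1) • Rmat B₁ B₂ =
      -vecMulVec ![B₁ 0 1, B₁ 1 1] ![-(B₂ 1 1), B₂ 0 1] := by
    rw [Rmat, smul_smul, mul_neg, mul_inv_cancel₀ hden, neg_one_smul]
  rw [eq_inv_smul_iff₀ hden, smul_sub, hR, sub_neg_eq_add]
  ext i j
  fin_cases i <;> fin_cases j <;> simp [vecMulVec_apply] <;> ring

theorem mul_one_sub_Rmat {B₁ B₂ : Matrix (Fin 2) (Fin 2) ℂ} (h₂ : B₂.det = 0)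
    (hden : B₁ 0 1 * B₂ 1 1 - B₁ 1 1 * B₂ 0 1 ≠ 0) :
    B₂ * (1 - Rmat B₁ B₂) = B₂.trace • (1 - Rmat B₁ B₂) := by
  rw [one_sub_Rmat hden, Matrix.mul_smul, mul_vecMulVec, mulVec_mulVec,
    mul_self_eq_trace_smul_of_det_eq_zero h₂, smul_mulVec, smul_vecMulVec, smul_comm]

theorem trace_comm_B2_R (B₁ B₂ : Matrix (Fin 2) (Fin 2) ℂ)
    (h₂ : B₂.det = 0)
    (hden : B₁ 0 1 * B₂ 1 1 - B₁ 1 1 * B₂ 0 1 ≠ 0)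
    (M : Matrix (Fin 2) (Fin 2) ℂ) :
    ((M * B₂ - B₂ * M) * Rmat B₁ B₂).trace - (M * B₂).trace
      = B₂.trace * (M * (Rmat B₁ B₂ - 1)).trace :=
  trace_commutator_mul_sub_trace_mul M B₂ _ (Rmat_mul_eq_zero B₁ h₂) (mul_one_sub_Rmat h₂ hden)
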